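/- arXiv:2311.01077 — 3 statements merged into one kernel-verified Lean document; each statement's English description precedes it below -/
import Mathlib

section
/- Let G be a finite simple graph with n vertices and m edges, and let Ĝ be a 1-regular graph on vertex set E(G) (the conflict graph). If m < 2n, then there exists a vertex v of G such that the set ∂v of edges of G incident to v contains no two edges that are adjacent in Ĝ (i.e., ∂v is an independent set in Ĝ). -/
/-- If a finite simple graph `G` with `n` vertices and `m` edges has a
1-regular conflict graph `Ĝ` on `E(G)` and `m < 2n`, then some vertex `v` has a
conflict-free incident edge set `∂v` (independent in `Ĝ`). -/
theorem conflict_free_vertex_of_few_edges {V : Type*} [Fintype V] [DecidableEq V]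
    (G : SimpleGraph V) [DecidableRel G.Adj]
    (Ghat : SimpleGraph G.edgeSet)
    (hreg : ∀ e : G.edgeSet, ∃! f : G.edgeSet, Ghat.Adj e f)
    (hm : G.edgeFinset.card < 2 * Fintype.card V) :
    ∃ v : V, ∀ e f : G.edgeSet,
      v ∈ (e : Sym2 V) → v ∈ (f : Sym2 V) → ¬ Ghat.Adj e f := by
  by_contra h
  push_neg at h
  choose e f he hf hadj using h
  have huniq : ∀ a b c : G.edgeSet, Ghat.Adj a b → Ghat.Adj a c → b = c := by
    intro a b c hb hc
    obtain ⟨d, _, hd⟩ := hreg a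
    rw [hd b hb, hd c hc]
  have hne : ∀ v, e v ≠ f v := fun v hvf => Ghat.irrefl (hvf ▸ hadj v)
  have hshare : ∀ v w : V, v ∈ (e w : Sym2 V) → v ∈ (f w : Sym2 V) → v = w := by
    intro v w hv1 hv2
    by_contra hvw
    have h1 : (e w : Sym2 V) = s(v, w) := (Sym2.mem_and_mem_iff hvw).mp ⟨hv1, he w⟩
    have h2 : (f w : Sym2 V) = s(v, w) := (Sym2.mem_and_mem_iff hvw).mp ⟨hv2, hf w⟩
    exact hne w (Subtype.ext (h1.trans h2.symm))
  have hinj : Function.Injective (fun p : V × Bool => if p.2 then f p.1 else e p.1) := by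
    rintro ⟨v, bv⟩ ⟨w, bw⟩ hvw
    simp only at hvw
    rcases bv <;> rcases bw <;> simp only [if_true, if_false, Bool.false_eq_true] at hvw ⊢
    · -- e v = e w
      have hff : f v = f w := huniq (e v) (f v) (f w) (hadj v) (hvw ▸ hadj w)
      have : v = w := hshare v w (hvw ▸ he v) (hff ▸ hf v)
      simp [this]
    · -- e v = f w
      have hfe : f v = e w := huniq (e v) (f v) (e w) (hadj v) (hvw ▸ (hadj w).symm)
      have hv : v = w := hshare v w (hfe ▸ hf v) (hvw ▸ he v)
      exact absurd (hv ▸ hvw) (hne v)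
    · -- f v = e w
      have hef : e v = f w := huniq (f v) (e v) (f w) (hadj v).symm (hvw ▸ hadj w)
      have hv : v = w := hshare v w (hvw ▸ hf v) (hef ▸ he v)
      exact absurd (hv ▸ hef) (hne v)
    · -- f v = f w
      have hee : e v = e w := huniq (f v) (e v) (e w) (hadj v).symm (hvw ▸ (hadj w).symm)
      have : v = w := hshare v w (hee ▸ he v) (hvw ▸ hf v)
      simp [this]
  have hcard := Fintype.card_le_of_injective _ hinj
  rw [Fintype.card_prod, Fintype.card_bool] at hcard
  have hE : Fintype.card G.edgeSet = G.edgeFinset.card := by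
    rw [SimpleGraph.edgeFinset, Set.toFinset_card]
  rw [hE] at hcard
  omega
end

section
/- Let G be a finite simple graph and Ĝ a 1-regular conflict graph on E(G). If for every vertex v of G the edge set ∂v contains at least one conflicting pair (two edges adjacent in Ĝ), then G has at least 2n edges, where n is the number of vertices of G. -/
/-- If every vertex of `G` has a conflicting pair of incident edges
(with respect to a 1-regular conflict graph `Ĝ` on `E(G)`), then `G` has at
least `2n` edges. -/
theorem many_edges_of_all_vertices_conflicting {V : Type*} [Fintype V] [DecidableEq V]
    (G : SimpleGraph V) [DecidableRel G.Adj]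
    (Ghat : SimpleGraph G.edgeSet)
    (hreg : ∀ e : G.edgeSet, ∃! f : G.edgeSet, Ghat.Adj e f)
    (hconf : ∀ v : V, ∃ e f : G.edgeSet,
      v ∈ (e : Sym2 V) ∧ v ∈ (f : Sym2 V) ∧ e ≠ f ∧ Ghat.Adj e f) :
    2 * Fintype.card V ≤ G.edgeFinset.card := by
  choose e f he hf hne hadj using hconf
  have huniq : ∀ (a b c : G.edgeSet), Ghat.Adj a b → Ghat.Adj a c → b = c := by
    intro a b c hb hc
    obtain ⟨d, _, hd⟩ := hreg a
    rw [hd b hb, hd c hc]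
  have hsep : ∀ (v w : V) (a b : G.edgeSet), a ≠ b →
      v ∈ (a : Sym2 V) → v ∈ (b : Sym2 V) → w ∈ (a : Sym2 V) → w ∈ (b : Sym2 V) → v = w := by
    intro v w a b hab hva hvb hwa hwb
    by_contra hvw
    exact hab (Subtype.ext (((Sym2.mem_and_mem_iff hvw).mp ⟨hva, hwa⟩).trans
      ((Sym2.mem_and_mem_iff hvw).mp ⟨hvb, hwb⟩).symm))
  have hinj : Function.Injective (fun p : V × Bool => if p.2 then f p.1 else e p.1) := by
    rintro ⟨v, bv⟩ ⟨w, bw⟩ h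
    cases bv <;> cases bw <;> simp only [Bool.false_eq_true, if_true, if_false, reduceIte] at h
    · -- e v = e w
      have hf' : f v = f w := huniq (e v) (f v) (f w) (hadj v) (h ▸ hadj w)
      have : v = w := hsep v w (e v) (f v) (hne v) (he v) (hf v)
        (by rw [h]; exact he w) (by rw [hf']; exact hf w)
      simp [this]
    · -- e v = f w
      have hfw : Ghat.Adj (f w) (e w) := (Ghat.adj_symm (hadj w))
      have hfe : f v = e w := huniq (e v) (f v) (e w) (hadj v) (h ▸ hfw)
      have hvw : v = w := hsep v w (e v) (f v) (hne v) (he v) (hf v)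
        (by rw [h]; exact hf w) (by rw [hfe]; exact he w)
      exact absurd (hvw ▸ h) (hne v)
    · -- f v = e w
      have hfv : Ghat.Adj (f v) (e v) := (Ghat.adj_symm (hadj v))
      have hfe : e v = f w := huniq (f v) (e v) (f w) hfv (h ▸ hadj w)
      have hvw : v = w := hsep v w (e v) (f v) (hne v) (he v) (hf v)
        (by rw [hfe]; exact hf w) (by rw [h]; exact he w)
      exact absurd (hvw ▸ hfe) (hne v)
    · -- f v = f w
      have hfv : Ghat.Adj (f v) (e v) := (Ghat.adj_symm (hadj v))
      have hfw : Ghat.Adj (f w) (e w) := (Ghat.adj_symm (hadj w))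
      have he' : e v = e w := huniq (f v) (e v) (e w) hfv (h ▸ hfw)
      have : v = w := hsep v w (e v) (f v) (hne v) (he v) (hf v)
        (by rw [he']; exact he w) (by rw [h]; exact hf w)
      simp [this]
  have hcard := Fintype.card_le_of_injective _ hinj
  rw [Fintype.card_prod, Fintype.card_bool] at hcard
  rw [SimpleGraph.edgeFinset, Set.toFinset_card]
  omega
end

section
/- Let G be a finite connected simple graph and Ĝ a conflict graph on E(G). Define a family of clauses ℱ over variables {x_v : v ∈ V(G)} as follows: for every pair of conflicting edges uv and rs (adjacent in Ĝ), if they share an endpoint u = r, add clauses {x_u, ¬x_v, ¬x_s} and {¬x_u, x_v, x_s}; if they are vertex-disjoint, add the four clauses {x_u, ¬x_v, x_r, ¬x_s}, {x_u, ¬x_v, ¬x_r, x_s}, {¬x_u, x_v, x_r, ¬x_s}, {¬x_u, x_v, ¬x_r, x_s}. Then G has a conflict-free cut with respect to Ĝ if and only if ℱ has a non-constant satisfying assignment. -/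
/-- The two 3-clauses `{x_u, ¬x_v, ¬x_s}` and `{¬x_u, x_v, x_s}` are satisfied by `α`. -/
def Sat3 {V : Type*} (α : V → Bool) (u v s : V) : Prop :=
  (α u = true ∨ α v = false ∨ α s = false) ∧
  (α u = false ∨ α v = true ∨ α s = true)

/-- The four 4-clauses `{x_u, ¬x_v, x_r, ¬x_s}`, `{x_u, ¬x_v, ¬x_r, x_s}`,
`{¬x_u, x_v, x_r, ¬x_s}`, `{¬x_u, x_v, ¬x_r, x_s}` are satisfied by `α`. -/
def Sat4 {V : Type*} (α : V → Bool) (u v r s : V) : Prop :=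
  (α u = true ∨ α v = false ∨ α r = true ∨ α s = false) ∧
  (α u = true ∨ α v = false ∨ α r = false ∨ α s = true) ∧
  (α u = false ∨ α v = true ∨ α r = true ∨ α s = false) ∧
  (α u = false ∨ α v = true ∨ α r = false ∨ α s = true)

/-- `α` satisfies the clause family associated to `(G, Ĝ)`: for each pair of
conflicting edges `uv`, `rs`, the corresponding clauses hold. -/
def SatisfiesConflictFormula {V : Type*} (G : SimpleGraph V)
    (Ghat : SimpleGraph G.edgeSet) (α : V → Bool) : Prop :=
  ∀ e f : G.edgeSet, Ghat.Adj e f →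
    ∀ u v r s : V, (e : Sym2 V) = s(u, v) → (f : Sym2 V) = s(r, s) →
      (u = r → Sat3 α u v s) ∧
      (u ≠ r → u ≠ s → v ≠ r → v ≠ s → Sat4 α u v r s)

/-- `F` is a conflict-free cut of `(G, Ĝ)`. -/
def ConflictFreeCut {V : Type*} (G : SimpleGraph V)
    (Ghat : SimpleGraph G.edgeSet) (F : Set (Sym2 V)) : Prop :=
  F ⊆ G.edgeSet ∧ ¬ (G.deleteEdges F).Connected ∧
  ∀ e f : G.edgeSet, (e : Sym2 V) ∈ F → (f : Sym2 V) ∈ F → ¬ Ghat.Adj e f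

lemma sat3_iff {V : Type*} (α : V → Bool) (u v s : V) :
    Sat3 α u v s ↔ ¬(α u ≠ α v ∧ α u ≠ α s) := by
  unfold Sat3
  cases hu : α u <;> cases hv : α v <;> cases hs : α s <;> simp

lemma sat4_iff {V : Type*} (α : V → Bool) (u v r s : V) :
    Sat4 α u v r s ↔ ¬(α u ≠ α v ∧ α r ≠ α s) := by
  unfold Sat4
  cases hu : α u <;> cases hv : α v <;> cases hr : α r <;> cases hs : α s <;> simp

/-- A finite connected graph `G` with conflict graph `Ĝ` has a
conflict-free cut iff the associated clause family has a non-constant satisfying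
assignment. -/
theorem conflictFreeCut_iff_nonconstant_sat {V : Type*} [Fintype V]
    (G : SimpleGraph V) (hconn : G.Connected) (Ghat : SimpleGraph G.edgeSet) :
    (∃ F : Set (Sym2 V), ConflictFreeCut G Ghat F) ↔
    (∃ α : V → Bool, (∃ a b : V, α a ≠ α b) ∧ SatisfiesConflictFormula G Ghat α) := by
  classical
  constructor
  · rintro ⟨F, _hFsub, hFdis, hFfree⟩
    have hnonempty : Nonempty V := hconn.nonempty
    have hnp : ¬ (G.deleteEdges F).Preconnected := fun h => hFdis ⟨h⟩
    rw [SimpleGraph.Preconnected] at hnp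
    push_neg at hnp
    obtain ⟨a, b, hab⟩ := hnp
    set α : V → Bool := fun v => decide ((G.deleteEdges F).Reachable a v) with hα
    have key : ∀ u v : V, G.Adj u v → α u ≠ α v → s(u, v) ∈ F := by
      intro u v huv hne
      by_contra hmem
      have hadj : (G.deleteEdges F).Adj u v :=
        SimpleGraph.deleteEdges_adj.mpr ⟨huv, hmem⟩
      exact hne (by
        simp only [hα]
        exact decide_eq_decide.mpr
          ⟨fun h => h.trans hadj.reachable, fun h => h.trans hadj.symm.reachable⟩)
    refine ⟨α, ⟨a, b, ?_⟩, ?_⟩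
    · have ha : α a = true := by
        simp only [hα]; exact decide_eq_true (SimpleGraph.Reachable.refl a)
      have hb : α b = false := by
        simp only [hα]; exact decide_eq_false hab
      rw [ha, hb]; simp
    · intro e f hadj u v r s hue hfe
      constructor
      · intro hur
        subst hur
        rw [sat3_iff]
        rintro ⟨h1, h2⟩
        have hA1 : G.Adj u v := G.mem_edgeSet.mp (hue ▸ e.2)
        have hA2 : G.Adj u s := G.mem_edgeSet.mp (hfe ▸ f.2)
        have he' : (e : Sym2 V) ∈ F := by rw [hue]; exact key u v hA1 h1
        have hf' : (f : Sym2 V) ∈ F := by rw [hfe]; exact key u s hA2 h2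
        exact hFfree e f he' hf' hadj
      · intro _ _ _ _
        rw [sat4_iff]
        rintro ⟨h1, h2⟩
        have hA1 : G.Adj u v := G.mem_edgeSet.mp (hue ▸ e.2)
        have hA2 : G.Adj r s := G.mem_edgeSet.mp (hfe ▸ f.2)
        have he' : (e : Sym2 V) ∈ F := by rw [hue]; exact key u v hA1 h1
        have hf' : (f : Sym2 V) ∈ F := by rw [hfe]; exact key r s hA2 h2
        exact hFfree e f he' hf' hadj
  · rintro ⟨α, ⟨a, b, hab⟩, hsat⟩
    set F : Set (Sym2 V) := {p | ∃ u v, p = s(u, v) ∧ G.Adj u v ∧ α u ≠ α v} with hF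
    have walkconst : ∀ x y : V, (G.deleteEdges F).Walk x y → α x = α y := by
      intro x y w
      induction w with
      | nil => rfl
      | @cons x c y h p ih =>
        rw [SimpleGraph.deleteEdges_adj] at h
        have hxc : α x = α c := by
          by_contra hne
          exact h.2 ⟨x, c, rfl, h.1, hne⟩
        exact hxc.trans ih
    refine ⟨F, ?_, ?_, ?_⟩
    · rintro p ⟨u, v, rfl, hadj, _⟩
      exact G.mem_edgeSet.mpr hadj
    · intro hcon
      exact hab ((hcon.preconnected a b).elim (walkconst a b))
    · intro e f he hf hadj
      obtain ⟨u, v, hue, _, h1⟩ := he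
      obtain ⟨r, s, hfe, _, h2⟩ := hf
      by_cases hur : u = r
      · subst hur
        have := (hsat e f hadj u v u s hue hfe).1 rfl
        rw [sat3_iff] at this
        exact this ⟨h1, h2⟩
      · by_cases hus : u = s
        · subst hus
          have := (hsat e f hadj u v u r hue (by rw [hfe, Sym2.eq_swap])).1 rfl
          rw [sat3_iff] at this
          exact this ⟨h1, h2.symm⟩
        · by_cases hvr : v = r
          · subst hvr
            have := (hsat e f hadj v u v s (by rw [hue, Sym2.eq_swap]) hfe).1 rfl
            rw [sat3_iff] at this
            exact this ⟨h1.symm, h2⟩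
          · by_cases hvs : v = s
            · subst hvs
              have := (hsat e f hadj v u v r (by rw [hue, Sym2.eq_swap])
                (by rw [hfe, Sym2.eq_swap])).1 rfl
              rw [sat3_iff] at this
              exact this ⟨h1.symm, h2.symm⟩
            · have := (hsat e f hadj u v r s hue hfe).2 hur hus hvr hvs
              rw [sat4_iff] at this
              exact this ⟨h1, h2⟩
end
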